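/- If the σ-martingale measure Q with square-integrable density satisfies the reverse Hölder inequality R_2(P) with constant C (i.e., E[Z_T^2 | F_τ] ≤ C Z_τ^2 for all stopping times τ ≤ T), then the pure-investment value process satisfies V^0_t(1) ≥ 1/C > 0 for all t P-a.s. -/

import Mathlib

open MeasureTheory

/-!
Write `Z_t = E[Z_T | F_t]`, which is a.s. positive, and `H = 1 + ∫_t^T ϑ dS`. The σ-martingale
property gives `E[Z_T H | F_t] = Z_t`, so the conditional Cauchy–Schwarz inequality and `R₂(P)` at
the deterministic time `τ = t` give `Z_t² ≤ E[Z_T² | F_t] E[H² | F_t] ≤ C Z_t² E[H² | F_t]`, i.e.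
`E[H² | F_t] ≥ 1/C` for every strategy `ϑ`; hence so is their greatest lower bound `V⁰_t(1)`.
Conditional Cauchy–Schwarz comes from the discriminant of `q ↦ E[(q f - g)² | m]`, which is a.s.
nonnegative simultaneously for all rational `q`, hence for all real `q`.
-/

namespace MeasureTheory

variable {Ω : Type*} {m m₀ : MeasurableSpace Ω} {μ : Measure Ω}

lemma condExp_pos (hm : m ≤ m₀) [SigmaFinite (μ.trim hm)] {f : Ω → ℝ} (hf_int : Integrable f μ)
    (hf : ∀ᵐ ω ∂μ, 0 < f ω) : ∀ᵐ ω ∂μ, 0 < μ[f | m] ω := by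
  set A := {ω | μ[f | m] ω ≤ 0}
  have hA : MeasurableSet[m] A := (stronglyMeasurable_condExp (f := f)).measurable measurableSet_Iic
  suffices μ A = 0 by simpa [ae_iff, A] using this
  by_contra hA0
  have h_pos : 0 < ∫ ω in A, f ω ∂μ := by
    rw [setIntegral_pos_iff_support_of_nonneg_ae (ae_restrict_of_ae (hf.mono fun _ h => h.le))
      hf_int.integrableOn]
    exact (pos_iff_ne_zero.2 hA0).trans_le
      (measure_mono_ae (hf.mono fun _ hω hA => ⟨hω.ne', hA⟩))
  have h_nonpos : ∫ ω in A, μ[f | m] ω ∂μ ≤ 0 := setIntegral_nonpos (hm _ hA) fun _ h => h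
  linarith [setIntegral_condExp hm hf_int hA]

lemma condExp_const_mul_sub_sq {f g : Ω → ℝ} (hf : MemLp f 2 μ) (hg : MemLp g 2 μ) (c : ℝ) :
    μ[fun ω => (c * f ω - g ω) ^ 2 | m] =ᵐ[μ]
      (c ^ 2) • μ[fun ω => f ω ^ 2 | m] - (2 * c) • μ[fun ω => f ω * g ω | m]
        + μ[fun ω => g ω ^ 2 | m] := by
  have hfg : Integrable (fun ω => f ω * g ω) μ := hf.integrable_mul hg
  have h_expand : (fun ω => (c * f ω - g ω) ^ 2) = (c ^ 2) • (fun ω => f ω ^ 2)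
      - (2 * c) • (fun ω => f ω * g ω) + fun ω => g ω ^ 2 := by
    funext ω; simp only [Pi.add_apply, Pi.sub_apply, Pi.smul_apply, smul_eq_mul]; ring
  rw [h_expand]
  refine (condExp_add ((hf.integrable_sq.smul _).sub (hfg.smul _)) hg.integrable_sq m).trans ?_
  refine .add ?_ .rfl
  exact (condExp_sub (hf.integrable_sq.smul _) (hfg.smul _) m).trans
    ((condExp_smul _ _ m).sub (condExp_smul _ _ m))

theorem condExp_mul_sq_le {f g : Ω → ℝ} (hf : MemLp f 2 μ) (hg : MemLp g 2 μ) :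
    ∀ᵐ ω ∂μ, μ[fun ω => f ω * g ω | m] ω ^ 2
      ≤ μ[fun ω => f ω ^ 2 | m] ω * μ[fun ω => g ω ^ 2 | m] ω := by
  have h_rat : ∀ q : ℚ, ∀ᵐ ω ∂μ, 0 ≤ μ[fun ω => f ω ^ 2 | m] ω * ((q : ℝ) * q)
      + (-2 * μ[fun ω => f ω * g ω | m] ω) * q + μ[fun ω => g ω ^ 2 | m] ω := by
    intro q
    filter_upwards [condExp_nonneg (m := m) (ae_of_all μ fun ω => sq_nonneg ((q : ℝ) * f ω - g ω)),
      condExp_const_mul_sub_sq hf hg q] with ω h_nonneg h_eq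
    rw [h_eq] at h_nonneg
    simp only [Pi.add_apply, Pi.sub_apply, Pi.smul_apply, smul_eq_mul, Pi.zero_apply] at h_nonneg
    linarith
  filter_upwards [ae_all_iff.2 h_rat] with ω hω
  have h_real : ∀ x : ℝ, 0 ≤ μ[fun ω => f ω ^ 2 | m] ω * (x * x)
      + (-2 * μ[fun ω => f ω * g ω | m] ω) * x + μ[fun ω => g ω ^ 2 | m] ω := fun x =>
    Rat.denseRange_cast.induction_on x (isClosed_le continuous_const (by fun_prop)) hω
  have h_discrim := discrim_le_zero h_real
  rw [discrim] at h_discrim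
  linarith

end MeasureTheory

theorem reverse_Holder_implies_value_bounded_below
    {Ω : Type*} {m : MeasurableSpace Ω} (μ : Measure Ω) [IsProbabilityMeasure μ]
    (F : Filtration ℝ m) (T : ℝ)
    (ZT : Ω → ℝ) (hZpos : ∀ᵐ ω ∂μ, 0 < ZT ω) (hZ2 : MemLp ZT 2 μ)
    (C : ℝ) (hC : 0 < C)
    (hR2 : ∀ (τ : Ω → ℝ) (hτ : IsStoppingTime F (fun ω => (τ ω : WithTop ℝ))), (∀ ω, τ ω ∈ Set.Icc 0 T) →
      μ[fun ω => (ZT ω) ^ 2 | hτ.measurableSpace] ≤ᵐ[μ]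
        fun ω => C * ((μ[ZT | hτ.measurableSpace]) ω) ^ 2)
    (Θ : Type*) (Gfrom : Θ → ℝ → Ω → ℝ)
    (hG2 : ∀ ϑ t, MemLp (Gfrom ϑ t) 2 μ)
    (hQmart : ∀ (ϑ : Θ) (t : ℝ), 0 ≤ t → t ≤ T →
      μ[fun ω => ZT ω * Gfrom ϑ t ω | F t] =ᵐ[μ] 0)
    (V : ℝ → Ω → ℝ)
    (hVglb : ∀ t (W : Ω → ℝ),
      (∀ ϑ : Θ, W ≤ᵐ[μ] μ[fun ω => (1 + Gfrom ϑ t ω) ^ 2 | F t]) → W ≤ᵐ[μ] V t) :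
    ∀ t, 0 ≤ t → t ≤ T → ∀ᵐ ω ∂μ, 1 / C ≤ V t ω := by
  intro t ht0 htT
  have hY_pos : ∀ᵐ ω ∂μ, 0 < μ[ZT | F t] ω :=
    condExp_pos (F.le t) (hZ2.integrable one_le_two) hZpos
  have hR2_t : μ[fun ω => ZT ω ^ 2 | F t] ≤ᵐ[μ] fun ω => C * μ[ZT | F t] ω ^ 2 := by
    have h := hR2 (fun _ => t) (isStoppingTime_const F t) fun _ => ⟨ht0, htT⟩
    rwa [IsStoppingTime.measurableSpace_const] at h
  refine hVglb t (fun _ => 1 / C) fun ϑ => ?_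
  have hH2 : MemLp (fun ω => 1 + Gfrom ϑ t ω) 2 μ := (memLp_const (1 : ℝ)).add (hG2 ϑ t)
  have hZH : μ[fun ω => ZT ω * (1 + Gfrom ϑ t ω) | F t] =ᵐ[μ] μ[ZT | F t] := by
    have h_split : (fun ω => ZT ω * (1 + Gfrom ϑ t ω)) = ZT + fun ω => ZT ω * Gfrom ϑ t ω := by
      funext ω; simp only [Pi.add_apply]; ring
    rw [h_split]
    refine (condExp_add (hZ2.integrable one_le_two) (hZ2.integrable_mul (hG2 ϑ t)) _).trans ?_
    exact (Filter.EventuallyEq.rfl.add (hQmart ϑ t ht0 htT)).trans (add_zero _).eventuallyEq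
  filter_upwards [condExp_mul_sq_le (m := F t) hZ2 hH2, hZH, hR2_t, hY_pos,
    condExp_nonneg (m := F t) (ae_of_all μ fun ω => sq_nonneg (1 + Gfrom ϑ t ω))]
    with ω h_cs h_eq h_rh hY h_nonneg
  rw [h_eq] at h_cs
  rw [div_le_iff₀' hC]
  have h_chain := h_cs.trans (mul_le_mul_of_nonneg_right h_rh h_nonneg)
  refine le_of_mul_le_mul_left ?_ (pow_pos hY 2)
  linarith
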